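/- (Fold lemma) If u and v are distinct vertices of a finite graph G with N(u) ⊆ N(v), then the inclusion Ind(G \ v) ↪ Ind(G) is a homotopy equivalence. -/
import Mathlib


open scoped Classical

noncomputable section

/-- The geometric realization of the independence complex of the induced subgraph of a
graph (given by its adjacency relation `R`) on the allowed vertex set `A`: the set of
convex-combination functions `f : V → ℝ` whose support is an independent set contained
in `A`. For `A = Set.univ` this is the geometric realization of `Ind(G)` itself. -/
def geomIn {V : Type*} [Fintype V] (R : V → V → Prop) (A : Set V) : Set (V → ℝ) :=
  {f | (∀ x, 0 ≤ f x) ∧ (∑ x, f x) = 1 ∧ (∀ x, f x ≠ 0 → x ∈ A) ∧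
    ∀ x y, f x ≠ 0 → f y ≠ 0 → ¬ R x y}

/-- The fold map on functions: move the mass at `v` to `u`. -/
def foldFn {V : Type*} (u v : V) (f : V → ℝ) : V → ℝ :=
  fun x => if x = v then 0 else if x = u then f u + f v else f x

section FoldLemmas

variable {V : Type*} [Fintype V] (G : SimpleGraph V) (u v : V)

lemma foldFn_sum (huv : u ≠ v) (f : V → ℝ) : ∑ x, foldFn u v f x = ∑ x, f x := by
  have key : ∀ x, foldFn u v f x
      = f x + (if x = u then f v else 0) - (if x = v then f v else 0) := by
    intro x
    by_cases hx : x = v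
    · subst hx; simp [foldFn, huv.symm]
    · by_cases hxu : x = u
      · subst hxu; simp [foldFn, hx]
      · simp [foldFn, hx, hxu]
  simp only [key]
  rw [Finset.sum_sub_distrib, Finset.sum_add_distrib]
  simp

lemma foldFn_nonneg (f : V → ℝ) (hf : ∀ x, 0 ≤ f x) : ∀ x, 0 ≤ foldFn u v f x := by
  intro x
  unfold foldFn
  by_cases hx : x = v
  · simp [hx]
  · by_cases hxu : x = u
    · rw [if_neg hx, if_pos hxu]
      exact add_nonneg (hf u) (hf v)
    · simp [hx, hxu]; exact hf x

lemma key_adj (h : G.neighborSet u ⊆ G.neighborSet v) (f : V → ℝ)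
    (hf : f ∈ geomIn G.Adj Set.univ) (hfu : f u ≠ 0 ∨ f v ≠ 0) :
    ∀ x, f x ≠ 0 → ¬ G.Adj u x := by
  intro x hx hadj
  rcases hfu with h1 | h1
  · exact hf.2.2.2 u x h1 hx hadj
  · exact hf.2.2.2 v x h1 hx (h hadj)

/-- The combined independence property for anything supported in `supp f ∪ {u}`. -/
lemma indep_P (h : G.neighborSet u ⊆ G.neighborSet v) (f : V → ℝ)
    (hf : f ∈ geomIn G.Adj Set.univ) :
    ∀ x y, (f x ≠ 0 ∨ (x = u ∧ (f u ≠ 0 ∨ f v ≠ 0))) →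
      (f y ≠ 0 ∨ (y = u ∧ (f u ≠ 0 ∨ f v ≠ 0))) → ¬ G.Adj x y := by
  intro x y hx hy hadj
  rcases hx with hx | ⟨hxu, hxw⟩
  · rcases hy with hy | ⟨hyu, hyw⟩
    · exact hf.2.2.2 x y hx hy hadj
    · rw [hyu] at hadj
      exact key_adj G u v h f hf hyw x hx hadj.symm
  · rw [hxu] at hadj
    rcases hy with hy | ⟨hyu, hyw⟩
    · exact key_adj G u v h f hf hxw y hy hadj
    · rw [hyu] at hadj
      exact G.irrefl hadj

lemma foldFn_support (f : V → ℝ) :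
    ∀ x, foldFn u v f x ≠ 0 → (f x ≠ 0 ∨ (x = u ∧ (f u ≠ 0 ∨ f v ≠ 0))) := by
  intro x hx
  unfold foldFn at hx
  by_cases h1 : x = v
  · simp [h1] at hx
  · by_cases h2 : x = u
    · subst h2
      simp [h1] at hx
      right
      refine ⟨rfl, ?_⟩
      by_contra hc
      push_neg at hc
      simp [hc.1, hc.2] at hx
    · simp [h1, h2] at hx
      exact Or.inl hx

lemma comb_mem (huv : u ≠ v) (h : G.neighborSet u ⊆ G.neighborSet v)
    (t : ℝ) (ht0 : 0 ≤ t) (ht1 : t ≤ 1) (f : V → ℝ)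
    (hf : f ∈ geomIn G.Adj Set.univ) :
    (fun x => (1 - t) * foldFn u v f x + t * f x) ∈ geomIn G.Adj Set.univ := by
  refine ⟨?_, ?_, fun _ _ => trivial, ?_⟩
  · intro x
    have h1 := foldFn_nonneg u v f hf.1 x
    have h2 := hf.1 x
    have h3 : (0:ℝ) ≤ 1 - t := by linarith
    exact add_nonneg (mul_nonneg h3 h1) (mul_nonneg ht0 h2)
  · rw [Finset.sum_add_distrib, ← Finset.mul_sum, ← Finset.mul_sum,
      foldFn_sum u v huv f, hf.2.1]
    ring
  · intro x y hx hy
    have hsup : ∀ z, (1 - t) * foldFn u v f z + t * f z ≠ 0 →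
        (f z ≠ 0 ∨ (z = u ∧ (f u ≠ 0 ∨ f v ≠ 0))) := by
      intro z hz
      by_cases h1 : foldFn u v f z = 0
      · left
        intro h2
        exact hz (by rw [h1, h2]; ring)
      · exact foldFn_support u v f z h1
    exact indep_P G u v h f hf x y (hsup x hx) (hsup y hy)

lemma foldFn_mem (huv : u ≠ v) (h : G.neighborSet u ⊆ G.neighborSet v)
    (f : V → ℝ) (hf : f ∈ geomIn G.Adj Set.univ) :
    foldFn u v f ∈ geomIn G.Adj {x : V | x ≠ v} := by
  refine ⟨foldFn_nonneg u v f hf.1, by rw [foldFn_sum u v huv f]; exact hf.2.1, ?_, ?_⟩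
  · intro x hx
    intro hxv
    subst hxv
    simp [foldFn] at hx
  · intro x y hx hy
    exact indep_P G u v h f hf x y (foldFn_support u v f x hx) (foldFn_support u v f y hy)

end FoldLemmas

/-- Fold lemma: if `u ≠ v` are vertices of a finite graph `G` with `N(u) ⊆ N(v)`, then the
inclusion `Ind(G \ v) ↪ Ind(G)` is a homotopy equivalence, i.e. there is a homotopy
equivalence of the geometric realizations whose forward map is the inclusion. -/
theorem stmt_3 {V : Type*} [Fintype V] (G : SimpleGraph V) (u v : V) (huv : u ≠ v)
    (h : G.neighborSet u ⊆ G.neighborSet v) :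
    ∃ e : ContinuousMap.HomotopyEquiv
        (geomIn G.Adj {x : V | x ≠ v}) (geomIn G.Adj Set.univ),
      ∀ f : geomIn G.Adj {x : V | x ≠ v}, ((e.toFun f : V → ℝ)) = (f : V → ℝ) := by
  classical
  -- inclusion map
  have mem_incl : ∀ f : V → ℝ, f ∈ geomIn G.Adj {x : V | x ≠ v} →
      f ∈ geomIn G.Adj Set.univ := by
    intro f hf
    exact ⟨hf.1, hf.2.1, fun _ _ => trivial, hf.2.2.2⟩
  set X := geomIn G.Adj {x : V | x ≠ v}
  set Y := geomIn G.Adj Set.univ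
  let incl : C(X, Y) :=
    ⟨fun f => ⟨f.1, mem_incl f.1 f.2⟩, by
      apply Continuous.subtype_mk
      exact continuous_subtype_val⟩
  let retr : C(Y, X) :=
    ⟨fun f => ⟨foldFn u v f.1, foldFn_mem G u v huv h f.1 f.2⟩, by
      apply Continuous.subtype_mk
      apply continuous_pi
      intro x
      unfold foldFn
      by_cases hx : x = v
      · simp only [hx, if_pos rfl]
        exact continuous_const
      · by_cases hxu : x = u
        · simp only [if_neg hx, if_pos hxu]
          exact (((continuous_apply u).comp continuous_subtype_val).add
            ((continuous_apply v).comp continuous_subtype_val) :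
            Continuous fun f : Y => f.1 u + f.1 v)
        · simp only [if_neg hx, if_neg hxu]
          exact (continuous_apply x).comp continuous_subtype_val⟩
  have left_eq : retr.comp incl = ContinuousMap.id X := by
    ext f x
    have hfv : f.1 v = 0 := by
      by_contra hc
      exact (f.2.2.2.1 v hc) rfl
    show foldFn u v f.1 x = f.1 x
    unfold foldFn
    by_cases hx : x = v
    · simp [hx, hfv]
    · by_cases hxu : x = u
      · simp [hx, hxu, hfv, huv]
      · simp [hx, hxu]
  have right_htpy : (incl.comp retr).Homotopic (ContinuousMap.id Y) := by
    refine ⟨?_⟩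
    refine
      { toFun := fun p =>
          ⟨fun x => (1 - (p.1 : ℝ)) * foldFn u v p.2.1 x + (p.1 : ℝ) * p.2.1 x,
            comb_mem G u v huv h (p.1 : ℝ) p.1.2.1 p.1.2.2 p.2.1 p.2.2⟩,
        continuous_toFun := ?_,
        map_zero_left := ?_, map_one_left := ?_ }
    · apply Continuous.subtype_mk
      apply continuous_pi
      intro x
      have hc1 : Continuous fun p : unitInterval × Y => (p.1 : ℝ) :=
        continuous_subtype_val.comp continuous_fst
      have hc2 : Continuous fun p : unitInterval × Y => foldFn u v p.2.1 x := by
        unfold foldFn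
        by_cases hx : x = v
        · simp only [hx, if_pos rfl]; exact continuous_const
        · by_cases hxu : x = u
          · simp only [if_neg hx, if_pos hxu]
            exact (((continuous_apply u).comp
              (continuous_subtype_val.comp continuous_snd)).add
              ((continuous_apply v).comp (continuous_subtype_val.comp continuous_snd)) :
              Continuous fun p : unitInterval × Y => p.2.1 u + p.2.1 v)
          · simp only [if_neg hx, if_neg hxu]
            exact (continuous_apply x).comp (continuous_subtype_val.comp continuous_snd)
      have hc3 : Continuous fun p : unitInterval × Y => p.2.1 x :=
        (continuous_apply x).comp (continuous_subtype_val.comp continuous_snd)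
      exact ((continuous_const.sub hc1).mul hc2).add (hc1.mul hc3)
    · intro f
      apply Subtype.ext
      funext x
      show (1 - (0 : ℝ)) * foldFn u v f.1 x + (0 : ℝ) * f.1 x = foldFn u v f.1 x
      ring
    · intro f
      apply Subtype.ext
      funext x
      show (1 - (1 : ℝ)) * foldFn u v f.1 x + (1 : ℝ) * f.1 x = f.1 x
      ring
  refine ⟨⟨incl, retr, ?_, right_htpy⟩, fun f => rfl⟩
  rw [left_eq]
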